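/- Let G=(V,E) be a finite undirected graph with nonnegative vertex costs c : V → ℝ_{≥0}. The integrality gap of the LP relaxation min{Σ_{u∈V} c_u x_u : x ∈ Q_orient(G)} of the pseudoforest deletion set problem is at most 3: for every x ∈ Q_orient(G), there exists a pseudoforest deletion set U ⊆ V such that Σ_{u∈U} c(u) ≤ 3 · Σ_{u∈V} c(u) x_u. -/

import Mathlib

/- Common definitions for the polyhedral study of FVS / PFDS. -/

open scoped Classical
open Finset

namespace FVS

noncomputable section

variable {V : Type*}

/-- Degree of `u` in the subgraph of `G` induced on the vertex set `S`. -/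
def degIn [Fintype V] (G : SimpleGraph V) (S : Finset V) (u : V) : ℕ :=
  (S.filter fun v => G.Adj u v).card

/-- Number of edges of `G` with both endpoints in `S`, i.e. `|E[S]|`. -/
def edgesIn [Fintype V] (G : SimpleGraph V) (S : Finset V) : ℕ :=
  (G.edgeFinset.filter fun e => ∀ v ∈ e, v ∈ S).card

/-- A finite graph is a pseudoforest if each connected component has at most as many
edges as vertices. -/
def IsPseudoforest {W : Type*} [Fintype W] (H : SimpleGraph W) : Prop :=
  ∀ C : H.ConnectedComponent,
    (H.edgeFinset.filter fun e => ∀ v ∈ e, H.connectedComponentMk v = C).card ≤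
      (Finset.univ.filter fun v => H.connectedComponentMk v = C).card

/-- `U` is a pseudoforest deletion set for `G`: `G - U` is a pseudoforest. -/
def IsPFDS [Fintype V] (G : SimpleGraph V) (U : Finset V) : Prop :=
  IsPseudoforest (G.induce {v : V | v ∉ U})

/-- `F` is a feedback vertex set for `G`: `G - F` is acyclic. -/
def IsFVS [Fintype V] (G : SimpleGraph V) (F : Finset V) : Prop :=
  (G.induce {v : V | v ∉ F}).IsAcyclic

/-- Membership in the orientation polyhedron `P_orient(G)`: for every edge `e = uv`,
`x_u + x_v + y_{e,u} + y_{e,v} ≥ 1`; for every vertex `u`,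
`x_u + Σ_{e ∈ δ(u)} y_{e,u} ≤ 1`; and all variables are nonnegative.  The variables
`y e u` for pairs `(e, u)` where `e` is not an edge of `G` or `u` is not an endpoint
of `e` do not occur in the formulation and are pinned to `0`. -/
def POrient [Fintype V] (G : SimpleGraph V) (x : V → ℝ) (y : Sym2 V → V → ℝ) : Prop :=
  (∀ u v, G.Adj u v → 1 ≤ x u + x v + y s(u, v) u + y s(u, v) v) ∧
  (∀ u, x u + ∑ e ∈ G.edgeFinset.filter (fun e => u ∈ e), y e u ≤ 1) ∧
  (∀ u, 0 ≤ x u) ∧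
  (∀ e u, 0 ≤ y e u) ∧
  (∀ e u, ¬ (e ∈ G.edgeSet ∧ u ∈ e) → y e u = 0)

/-- Membership in `Q_orient(G)`, the projection of `P_orient(G)` to the `x`-variables. -/
def QOrient [Fintype V] (G : SimpleGraph V) (x : V → ℝ) : Prop :=
  ∃ y : Sym2 V → V → ℝ, POrient G x y

/-- Membership in the weak density polyhedron `P_WD(G)`:
`x ≥ 0` and `Σ_{u ∈ S} (d_S(u) - 1) x_u ≥ |E[S]| - |S|` for every `S ⊆ V`. -/
def PWD [Fintype V] (G : SimpleGraph V) (x : V → ℝ) : Prop :=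
  (∀ u, 0 ≤ x u) ∧
  ∀ S : Finset V, (edgesIn G S : ℝ) - S.card ≤ ∑ u ∈ S, ((degIn G S u : ℝ) - 1) * x u

/-- Membership in the strong density polyhedron `P_SD(G)`:
`x ≥ 0` and `Σ_{u ∈ S} (d_S(u) - 1) x_u ≥ |E[S]| - |S| + 1` whenever `E[S] ≠ ∅`. -/
def PSD [Fintype V] (G : SimpleGraph V) (x : V → ℝ) : Prop :=
  (∀ u, 0 ≤ x u) ∧
  ∀ S : Finset V, edgesIn G S ≠ 0 →
    (edgesIn G S : ℝ) - S.card + 1 ≤ ∑ u ∈ S, ((degIn G S u : ℝ) - 1) * x u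

/-- The induced subgraph `G[U]` is a cycle: it is connected and `2`-regular. -/
def IsInducedCycle [Fintype V] (G : SimpleGraph V) (U : Finset V) : Prop :=
  (G.induce (U : Set V)).Connected ∧ ∀ u ∈ U, degIn G U u = 2

/-- Membership in the cycle cover polyhedron `P_cycle-cover(G)`. -/
def PCycleCover [Fintype V] (G : SimpleGraph V) (x : V → ℝ) : Prop :=
  (∀ u, 0 ≤ x u) ∧ ∀ U : Finset V, IsInducedCycle G U → 1 ≤ ∑ u ∈ U, x u

/-- The induced subgraph `G[U]` is a `2`-pseudotree: connected with at least `|U| + 1` edges. -/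
def Is2PseudotreeInduced [Fintype V] (G : SimpleGraph V) (U : Finset V) : Prop :=
  (G.induce (U : Set V)).Connected ∧ U.card + 1 ≤ edgesIn G U

/-- Membership in the `2`-pseudotree cover polyhedron `P_2PT-cover(G)`. -/
def P2PTCover [Fintype V] (G : SimpleGraph V) (x : V → ℝ) : Prop :=
  (∀ u, 0 ≤ x u) ∧ ∀ U : Finset V, Is2PseudotreeInduced G U → 1 ≤ ∑ u ∈ U, x u

/-- `(x, y)` is an extreme point of `P_orient(G)`: it is feasible and is not a proper
convex combination of two distinct points of `P_orient(G)`. -/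
def POrientExtreme [Fintype V] (G : SimpleGraph V) (x : V → ℝ) (y : Sym2 V → V → ℝ) : Prop :=
  POrient G x y ∧
    ∀ (x₁ x₂ : V → ℝ) (y₁ y₂ : Sym2 V → V → ℝ) (t : ℝ),
      POrient G x₁ y₁ → POrient G x₂ y₂ → 0 < t → t < 1 →
      (∀ v, x v = t * x₁ v + (1 - t) * x₂ v) →
      (∀ e u, y e u = t * y₁ e u + (1 - t) * y₂ e u) →
      x₁ = x₂ ∧ y₁ = y₂

/-- `(x, y)` is a minimal point of `P_orient(G)`: decreasing any single coordinate by
any `ε > 0`, keeping the other coordinates unchanged, yields a point outside the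
polyhedron. -/
def POrientMinimal [Fintype V] (G : SimpleGraph V) (x : V → ℝ) (y : Sym2 V → V → ℝ) : Prop :=
  (∀ v, ∀ ε : ℝ, 0 < ε → ¬ POrient G (Function.update x v (x v - ε)) y) ∧
  (∀ e u, ∀ ε : ℝ, 0 < ε →
    ¬ POrient G x (fun e' u' => if e' = e ∧ u' = u then y e u - ε else y e' u'))

/-- `x` is an extreme point of `P_WD(G)`: it is feasible and is not a proper convex
combination of two distinct points of `P_WD(G)`. -/
def PWDExtreme [Fintype V] (G : SimpleGraph V) (x : V → ℝ) : Prop :=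
  PWD G x ∧
    ∀ (x₁ x₂ : V → ℝ) (t : ℝ), PWD G x₁ → PWD G x₂ → 0 < t → t < 1 →
      (∀ v, x v = t * x₁ v + (1 - t) * x₂ v) → x₁ = x₂

/-- The support graph `H(y)`: the bipartite graph on `V(G) ⊕ E(G)` joining a vertex `v`
to an edge `e` whenever `v` is an endpoint of the edge `e` of `G` and `y e v > 0`. -/
def supportGraph [Fintype V] (G : SimpleGraph V) (y : Sym2 V → V → ℝ) :
    SimpleGraph (V ⊕ Sym2 V) :=
  SimpleGraph.fromRel fun a b =>
    ∃ v e, a = Sum.inl v ∧ b = Sum.inr e ∧ e ∈ G.edgeSet ∧ v ∈ e ∧ 0 < y e v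

/-- The edge `e` lies on some cycle of `G`. -/
def OnCycle (G : SimpleGraph V) (e : Sym2 V) : Prop :=
  ∃ (u : V) (w : G.Walk u u), w.IsCycle ∧ e ∈ w.edges

/-- `G` has a semi-disjoint cycle: a cycle containing at most one vertex whose degree
in `G` is strictly larger than `2`. -/
def HasSemiDisjointCycle [Fintype V] (G : SimpleGraph V) : Prop :=
  ∃ (u : V) (w : G.Walk u u), w.IsCycle ∧
    (w.support.toFinset.filter fun v => 2 < G.degree v).card ≤ 1

/-- The set `δ(F, V - F)` of edges of `G` with exactly one endpoint in `F`. -/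
def cutEdges [Fintype V] (G : SimpleGraph V) (F : Finset V) : Finset (Sym2 V) :=
  G.edgeFinset.filter fun e => ∃ u v, e = s(u, v) ∧ u ∈ F ∧ v ∉ F

/-- The function `f_x(S) = |E[S]| - |S| - Σ_{u ∈ S} (d_S(u) - 1) x_u`. -/
def fWD [Fintype V] (G : SimpleGraph V) (x : V → ℝ) (S : Finset V) : ℝ :=
  (edgesIn G S : ℝ) - S.card - ∑ u ∈ S, ((degIn G S u : ℝ) - 1) * x u

/-- The row vector `row(S)` of the weak density constraint for the set `S`:
its coordinate at `u` is `d_S(u) - 1` if `u ∈ S` and `0` otherwise. -/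
def rowWD [Fintype V] (G : SimpleGraph V) (S : Finset V) (u : V) : ℝ :=
  if u ∈ S then (degIn G S u : ℝ) - 1 else 0

/-- The constraints (orientation), (load), (cumulative) and nonnegativity of the
purely orientation-based ILP formulation for FVS, with one copy `y f` of the
orientation variables for each edge `f` of `G`:
* `x_v + x_w + y^f_{e,v} + y^f_{e,w} ≥ 1` for all edges `e = vw` and all `f ∈ E`;
* `x_v + Σ_{e = vw ∈ E} y^f_{e,w} ≥ 1` for all `v ∈ V` and all `f ∈ E`;
* `Σ_{v ∈ V - {a,b}} x_v + Σ_{e = vw ∈ E - {f}} (y^f_{e,w} + y^f_{e,v}) ≤ |V| - 2`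
  for all `f = ab ∈ E`; and all variables nonnegative. -/
def OrientSD [Fintype V] (G : SimpleGraph V) (x : V → ℝ)
    (y : Sym2 V → Sym2 V → V → ℝ) : Prop :=
  (∀ f ∈ G.edgeSet, ∀ v w, G.Adj v w →
    1 ≤ x v + x w + y f s(v, w) v + y f s(v, w) w) ∧
  (∀ f ∈ G.edgeSet, ∀ v : V, 1 ≤ x v + ∑ w ∈ G.neighborFinset v, y f s(v, w) w) ∧
  (∀ a b : V, G.Adj a b →
    (∑ v ∈ Finset.univ \ {a, b}, x v) +
      (∑ e ∈ G.edgeFinset.erase s(a, b),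
        ∑ u ∈ Finset.univ.filter (fun u => u ∈ e), y s(a, b) e u)
      ≤ (Fintype.card V : ℝ) - 2) ∧
  (∀ u, 0 ≤ x u) ∧ (∀ f e u, 0 ≤ y f e u)

end
end FVS

/-!
Points of `Q_orient(G)` satisfy the weak density inequalities
`∑_{u ∈ S} (d_S(u) - 1) x_u ≥ |E[S]| - |S|`, by double counting the orientation variables over the
edges inside `S`. Rounding is by local ratio on a vertex set `R`: if `G[R]` is a pseudoforest take
nothing; drop a vertex of degree at most `1`; otherwise subtract from the costs the largest multiple
of the weights `d_R(u) - 1` keeping them nonnegative, recurse on `R` minus a vertex whose cost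
became zero, and prune the result to an inclusion-minimal deletion set `U`. In a graph of minimum
degree `2`, every tree component of the pseudoforest `G[R - U]` is adjacent to `U`, and by
minimality each `u ∈ U` sends at least two more edges into `R - U` than the number of tree
components it touches. Counting edges gives `∑_{u ∈ U} (d_R(u) - 1) ≤ 3 (|E[R]| - |R|)`, which the
weak density inequality for `R` bounds by three times the LP value of the weights.
-/

namespace FVS

noncomputable section

section EdgeCounting

variable {V : Type*} [Fintype V] (G : SimpleGraph V)

lemma degIn_mono {S T : Finset V} (h : S ⊆ T) (u : V) : degIn G S u ≤ degIn G T u :=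
  card_le_card (filter_subset_filter _ h)

lemma degIn_union {A B : Finset V} (h : Disjoint A B) (u : V) :
    degIn G (A ∪ B) u = degIn G A u + degIn G B u := by
  rw [degIn, filter_union, card_union_of_disjoint (disjoint_filter_filter h)]
  rfl

lemma degIn_insert {S : Finset V} {v : V} (hv : v ∉ S) (u : V) :
    degIn G (insert v S) u = degIn G S u + if G.Adj u v then 1 else 0 := by
  unfold degIn
  rw [filter_insert]
  split_ifs with h
  · exact card_insert_of_notMem fun h' => hv (mem_filter.1 h').1
  · rfl

lemma degIn_insert_self (S : Finset V) (v : V) : degIn G (insert v S) v = degIn G S v := by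
  simp [degIn, filter_insert]

lemma card_filter_mem_edgesIn {S : Finset V} {u : V} (hu : u ∈ S) :
    {e ∈ G.edgeFinset.filter (fun e => ∀ v ∈ e, v ∈ S) | u ∈ e}.card = degIn G S u := by
  refine (card_bij (fun v _ => s(u, v)) ?_ ?_ ?_).symm
  · intro v hv
    obtain ⟨hvS, hadj⟩ := mem_filter.1 hv
    simp only [mem_filter, SimpleGraph.mem_edgeFinset, SimpleGraph.mem_edgeSet,
      Sym2.mem_iff, forall_eq_or_imp, forall_eq]
    exact ⟨⟨hadj, hu, hvS⟩, Or.inl trivial⟩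
  · intro a _ b _ hab
    exact Sym2.congr_right.1 hab
  · intro e he
    obtain ⟨⟨heE, hend⟩, heu⟩ := mem_filter.1 he |>.imp_left mem_filter.1
    induction e using Sym2.ind with
    | _ a b =>
      have hadj : G.Adj a b := by simpa using heE
      rcases Sym2.mem_iff.1 heu with rfl | rfl
      · exact ⟨b, mem_filter.2 ⟨hend b (Sym2.mem_mk_right _ _), hadj⟩, rfl⟩
      · exact ⟨a, mem_filter.2 ⟨hend a (Sym2.mem_mk_left _ _), hadj.symm⟩, Sym2.eq_swap⟩

lemma edgesIn_empty : edgesIn G (∅ : Finset V) = 0 := by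
  refine card_eq_zero.2 (filter_eq_empty_iff.2 fun e _ h => ?_)
  induction e using Sym2.ind with
  | _ a _ => exact notMem_empty a (h a (Sym2.mem_mk_left _ _))

lemma edgesIn_insert {S : Finset V} {u : V} (hu : u ∉ S) :
    edgesIn G (insert u S) = edgesIn G S + degIn G S u := by
  unfold edgesIn
  rw [← card_filter_add_card_filter_not (fun e => u ∈ e),
    card_filter_mem_edgesIn G (mem_insert_self u S), degIn_insert_self, add_comm]
  congr 2
  ext e
  simp only [mem_filter, mem_insert]
  constructor
  · rintro ⟨⟨heE, hend⟩, hue⟩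
    exact ⟨heE, fun v hv => (hend v hv).resolve_left fun h => hue (h ▸ hv)⟩
  · rintro ⟨heE, hend⟩
    exact ⟨⟨heE, fun v hv => Or.inr (hend v hv)⟩, fun hue => hu (hend u hue)⟩

lemma edgesIn_union {A B : Finset V} (h : Disjoint A B) :
    edgesIn G (A ∪ B) = edgesIn G A + edgesIn G B + ∑ a ∈ A, degIn G B a := by
  induction A using Finset.induction_on with
  | empty => simp [edgesIn_empty]
  | @insert a A ha ih =>
    obtain ⟨haB, hAB⟩ := disjoint_insert_left.1 h
    rw [insert_union, edgesIn_insert G (by simp [ha, haB]), ih hAB, degIn_union G hAB,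
      sum_insert ha, edgesIn_insert G ha]
    ring

lemma sum_degIn (S : Finset V) : ∑ u ∈ S, degIn G S u = 2 * edgesIn G S := by
  induction S using Finset.induction_on with
  | empty => simp [edgesIn_empty]
  | @insert v S hv ih =>
    have hv_nbrs : ∑ u ∈ S, (if G.Adj u v then 1 else 0) = degIn G S v := by
      simp [sum_boole, degIn, G.adj_comm]
    rw [sum_insert hv, edgesIn_insert G hv, degIn_insert_self,
      sum_congr rfl fun u _ => degIn_insert G hv u, sum_add_distrib, hv_nbrs, ih]
    ring

lemma sum_degIn_comm (A B : Finset V) :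
    ∑ a ∈ A, degIn G B a = ∑ b ∈ B, degIn G A b := by
  simp only [degIn, card_filter]
  rw [sum_comm]
  simp [G.adj_comm]

variable {ι : Type*} {s : Finset ι} {f : ι → Finset V}

lemma degIn_biUnion (hs : (s : Set ι).PairwiseDisjoint f) (u : V) :
    degIn G (s.biUnion f) u = ∑ i ∈ s, degIn G (f i) u := by
  rw [degIn, filter_biUnion, card_biUnion]
  · rfl
  · exact fun i hi j hj hij => disjoint_filter_filter (hs hi hj hij)

lemma edgesIn_biUnion (hs : (s : Set ι).PairwiseDisjoint f)
    (hadj : (s : Set ι).Pairwise fun i j => ∀ a ∈ f i, ∀ b ∈ f j, ¬ G.Adj a b) :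
    edgesIn G (s.biUnion f) = ∑ i ∈ s, edgesIn G (f i) := by
  induction s using Finset.induction_on with
  | empty => simp [edgesIn_empty]
  | @insert i s hi ih =>
    rw [coe_insert] at hs hadj
    have hne : ∀ j ∈ s, i ≠ j := fun j hj h => hi (h ▸ hj)
    have hdisj : Disjoint (f i) (s.biUnion f) :=
      (disjoint_biUnion_right _ _ _).2 fun j hj => hs (Set.mem_insert i _) (by simp [hj]) (hne j hj)
    have hnbrs : ∀ a ∈ f i, degIn G (s.biUnion f) a = 0 := fun a ha =>
      card_eq_zero.2 <| filter_eq_empty_iff.2 fun b hb => by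
        obtain ⟨j, hj, hbj⟩ := mem_biUnion.1 hb
        exact hadj (Set.mem_insert i _) (by simp [hj]) (hne j hj) a ha b hbj
    rw [biUnion_insert, sum_insert hi, edgesIn_union G hdisj, sum_eq_zero hnbrs,
      ih (hs.subset (Set.subset_insert _ _)) (hadj.mono (Set.subset_insert _ _))]
    rfl

end EdgeCounting

section Components

variable {V : Type*} (G : SimpleGraph V)

def ReachIn (P : Finset V) : V → V → Prop :=
  Relation.ReflTransGen fun a b => a ∈ P ∧ b ∈ P ∧ G.Adj a b

def component (P : Finset V) (a : V) : Finset V := P.filter (ReachIn G P a)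

def components (P : Finset V) : Finset (Finset V) := P.image (component G P)

variable {G} {P Q C S : Finset V} {a b : V}

lemma ReachIn.symm (h : ReachIn G P a b) : ReachIn G P b a := by
  induction h with
  | refl => exact .refl
  | tail _ hcd ih =>
    obtain ⟨hc, hd, hadj⟩ := hcd
    exact Relation.ReflTransGen.head ⟨hd, hc, hadj.symm⟩ ih

lemma ReachIn.mono (hPQ : P ⊆ Q) (h : ReachIn G P a b) : ReachIn G Q a b := by
  induction h with
  | refl => exact .refl
  | tail _ hcd ih => exact ih.tail ⟨hPQ hcd.1, hPQ hcd.2.1, hcd.2.2⟩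

lemma mem_component : b ∈ component G P a ↔ b ∈ P ∧ ReachIn G P a b := mem_filter

lemma self_mem_component (ha : a ∈ P) : a ∈ component G P a :=
  mem_component.2 ⟨ha, .refl⟩

lemma component_subset : component G P a ⊆ P := filter_subset _ _

lemma component_eq_of_mem (h : b ∈ component G P a) : component G P b = component G P a := by
  obtain ⟨-, hab⟩ := mem_component.1 h
  ext c
  simp only [mem_component]
  exact ⟨fun ⟨hc, hbc⟩ => ⟨hc, hab.trans hbc⟩, fun ⟨hc, hac⟩ => ⟨hc, hab.symm.trans hac⟩⟩

lemma component_mem_components (ha : a ∈ P) : component G P a ∈ components G P :=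
  mem_image_of_mem _ ha

lemma component_eq_of_mem_components (hC : C ∈ components G P) (ha : a ∈ C) :
    component G P a = C := by
  obtain ⟨b, -, rfl⟩ := mem_image.1 hC
  exact component_eq_of_mem ha

lemma nonempty_of_mem_components (hC : C ∈ components G P) : C.Nonempty := by
  obtain ⟨b, hb, rfl⟩ := mem_image.1 hC
  exact ⟨b, self_mem_component hb⟩

lemma subset_of_mem_components (hC : C ∈ components G P) : C ⊆ P := by
  obtain ⟨b, -, rfl⟩ := mem_image.1 hC
  exact component_subset

lemma mem_of_adj_of_mem_components (hC : C ∈ components G P) (ha : a ∈ C) (hb : b ∈ P)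
    (hab : G.Adj a b) : b ∈ C := by
  rw [← component_eq_of_mem_components hC ha]
  exact mem_component.2 ⟨hb, .single ⟨subset_of_mem_components hC ha, hb, hab⟩⟩

lemma pairwiseDisjoint_components : (components G P : Set (Finset V)).PairwiseDisjoint id :=
  fun _ hC _ hD hCD => disjoint_left.2 fun _ haC haD =>
    hCD ((component_eq_of_mem_components hC haC).symm.trans
      (component_eq_of_mem_components hD haD))

lemma pairwise_not_adj_components :
    (components G P : Set (Finset V)).Pairwise fun C D => ∀ a ∈ C, ∀ b ∈ D, ¬ G.Adj a b :=
  fun _ hC _ hD hCD _ ha _ hb hab => disjoint_left.1 (pairwiseDisjoint_components hD hC hCD.symm)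
    hb (mem_of_adj_of_mem_components hC ha (subset_of_mem_components hD hb) hab)

lemma biUnion_inter_components (hS : S ⊆ P) : (components G P).biUnion (S ∩ ·) = S := by
  ext a
  simp only [mem_biUnion, mem_inter]
  exact ⟨fun ⟨_, _, ha, _⟩ => ha,
    fun ha => ⟨_, component_mem_components (hS ha), ha, self_mem_component (hS ha)⟩⟩

lemma pairwiseDisjoint_inter_components (S : Finset V) :
    (components G P : Set (Finset V)).PairwiseDisjoint (S ∩ ·) :=
  fun _ hC _ hD hCD =>
    (pairwiseDisjoint_components hC hD hCD).mono inter_subset_right inter_subset_right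

lemma sum_card_inter_components (hS : S ⊆ P) :
    ∑ C ∈ components G P, (S ∩ C).card = S.card := by
  conv_rhs => rw [← biUnion_inter_components (G := G) hS]
  exact (card_biUnion (pairwiseDisjoint_inter_components S)).symm

lemma ReachIn.reachIn_component (h : ReachIn G P a b) :
    ReachIn G (component G P a) a b := by
  induction h with
  | refl => exact .refl
  | @tail c d hac hcd ih =>
    obtain ⟨hc, hd, hadj⟩ := hcd
    exact ih.tail ⟨mem_component.2 ⟨hc, hac⟩, mem_component.2 ⟨hd, hac.tail ⟨hc, hd, hadj⟩⟩, hadj⟩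

lemma components_eq_singleton (hC : C ∈ components G P) : components G C = {C} := by
  obtain ⟨a, -, rfl⟩ := mem_image.1 hC
  have hreach : ∀ b ∈ component G P a, ReachIn G (component G P a) a b :=
    fun b hb => (mem_component.1 hb).2.reachIn_component
  calc components G (component G P a) = (component G P a).image fun _ => component G P a :=
        image_congr fun b hb => Subset.antisymm component_subset fun c hc =>
          mem_component.2 ⟨hc, (hreach b hb).symm.trans (hreach c hc)⟩
    _ = {component G P a} := image_const (nonempty_of_mem_components hC) _

lemma mem_components_of_subset (hC : C ∈ components G P) (hPQ : P ⊆ Q)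
    (hclosed : ∀ a ∈ C, ∀ b ∈ Q, G.Adj a b → b ∈ P) : C ∈ components G Q := by
  obtain ⟨a, haC⟩ := nonempty_of_mem_components hC
  have hstay : ∀ b, ReachIn G Q a b → b ∈ C := fun b hab => by
    induction hab with
    | refl => exact haC
    | tail _ hcd ih =>
      obtain ⟨-, hd, hadj⟩ := hcd
      exact mem_of_adj_of_mem_components hC ih (hclosed _ ih _ hd hadj) hadj
  refine mem_image.2 ⟨a, hPQ (subset_of_mem_components hC haC), ?_⟩
  apply Subset.antisymm fun b hb => hstay b (mem_component.1 hb).2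
  intro b hb
  rw [← component_eq_of_mem_components hC haC] at hb
  obtain ⟨hbP, hab⟩ := mem_component.1 hb
  exact mem_component.2 ⟨hPQ hbP, hab.mono hPQ⟩

end Components

section Sparse

variable {V : Type*} [Fintype V] (G : SimpleGraph V)

/-- `G[W]` is a pseudoforest, phrased through all subsets of `W` rather than its components. -/
def IsSparse (W : Finset V) : Prop := ∀ S ⊆ W, edgesIn G S ≤ S.card

def treeComponents (W : Finset V) : Finset (Finset V) :=
  (components G W).filter fun C => edgesIn G C + 1 = C.card

variable {G} {P S T U W C : Finset V} {u : V}

lemma IsSparse.mono (hW : IsSparse G W) (hS : S ⊆ W) : IsSparse G S :=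
  fun T hT => hW T (hT.trans hS)

lemma IsSparse.insert (hW : IsSparse G W) (hu : degIn G W u ≤ 1) : IsSparse G (insert u W) := by
  intro S hS
  by_cases huS : u ∈ S
  · have hS' : S.erase u ⊆ W := fun v hv =>
      (mem_insert.1 (hS (mem_of_mem_erase hv))).resolve_left (ne_of_mem_erase hv)
    rw [← insert_erase huS, edgesIn_insert G (notMem_erase u S),
      card_insert_of_notMem (notMem_erase u S)]
    have := hW _ hS'
    have := (degIn_mono G hS' u).trans hu
    omega
  · exact hW S fun v hv => (mem_insert.1 (hS hv)).resolve_left fun h => huS (h ▸ hv)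

lemma sum_degIn_inter_components (hS : S ⊆ P) (u : V) :
    ∑ C ∈ components G P, degIn G (S ∩ C) u = degIn G S u := by
  conv_rhs => rw [← biUnion_inter_components (G := G) hS]
  exact (degIn_biUnion G (pairwiseDisjoint_inter_components S) u).symm

lemma sum_edgesIn_inter_components (hS : S ⊆ P) :
    ∑ C ∈ components G P, edgesIn G (S ∩ C) = edgesIn G S := by
  conv_rhs => rw [← biUnion_inter_components (G := G) hS]
  refine (edgesIn_biUnion G (pairwiseDisjoint_inter_components S)
    fun _ hC _ hD hCD a ha b hb => ?_).symm
  exact pairwise_not_adj_components hC hD hCD a (mem_inter.1 ha).2 b (mem_inter.1 hb).2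

lemma degIn_eq_of_mem_components (hC : C ∈ components G P) (hu : u ∈ C) :
    degIn G P u = degIn G C u := by
  unfold degIn
  congr 1
  ext v
  simp only [mem_filter]
  exact ⟨fun ⟨hv, h⟩ => ⟨mem_of_adj_of_mem_components hC hu hv h, h⟩,
    fun ⟨hv, h⟩ => ⟨subset_of_mem_components hC hv, h⟩⟩

/-- Adding `v` to `P` merges the components of `G[P]` adjacent to `v`, of which there are at
most `degIn G P v`, into one. -/
lemma card_components_add_one_le {v : V} (hv : v ∉ P) :
    (components G P).card + 1 ≤ (components G (insert v P)).card + degIn G P v := by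
  set D := component G (insert v P) v
  have hD : D ∈ components G (insert v P) := component_mem_components (mem_insert_self v P)
  have hcover : components G P ⊆
      (P.filter (G.Adj v)).image (component G P) ∪ (components G (insert v P)).erase D := by
    intro C hC
    by_cases hadj : ∃ w ∈ C, G.Adj v w
    · obtain ⟨w, hwC, hvw⟩ := hadj
      exact mem_union_left _ <| mem_image.2 ⟨w, mem_filter.2 ⟨subset_of_mem_components hC hwC, hvw⟩,
        component_eq_of_mem_components hC hwC⟩
    · push Not at hadj
      refine mem_union_right _ <| mem_erase.2 ⟨fun hCD => hv <| subset_of_mem_components hC <|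
        hCD ▸ self_mem_component (mem_insert_self v P), ?_⟩
      refine mem_components_of_subset hC (subset_insert v P) fun a ha b hb hab => ?_
      exact (mem_insert.1 hb).resolve_left fun h => hadj a ha (h ▸ hab.symm)
  have hadj : ((P.filter (G.Adj v)).image (component G P)).card ≤ degIn G P v := card_image_le
  have := (card_le_card hcover).trans (card_union_le _ _)
  have := card_erase_of_mem hD
  have := card_pos.2 ⟨D, hD⟩
  omega

lemma edgesIn_add_card_components_add_card_le (hST : S ⊆ T) :
    edgesIn G S + (components G S).card + T.card ≤
      edgesIn G T + (components G T).card + S.card := by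
  obtain ⟨D, hSD, rfl⟩ : ∃ D, Disjoint S D ∧ T = S ∪ D :=
    ⟨T \ S, disjoint_sdiff, (union_sdiff_of_subset hST).symm⟩
  clear hST
  induction D using Finset.induction_on with
  | empty => simp
  | @insert v D hvD ih =>
    obtain ⟨hvS, hSD⟩ := disjoint_insert_right.1 hSD
    have hv : v ∉ S ∪ D := by simp [hvS, hvD]
    rw [union_insert, edgesIn_insert G hv, card_insert_of_notMem hv]
    have := card_components_add_one_le (G := G) hv
    have := ih hSD
    omega

lemma card_le_edgesIn_add_one_of_mem_components (hC : C ∈ components G P) :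
    C.card ≤ edgesIn G C + 1 := by
  have := edgesIn_add_card_components_add_card_le (G := G) (empty_subset C)
  rw [components_eq_singleton hC] at this
  simpa [edgesIn_empty, components] using this

lemma edgesIn_add_one_le_card_of_subset (hC : C ∈ components G P)
    (htree : edgesIn G C + 1 = C.card) (hS : S ⊆ C) (hne : S.Nonempty) :
    edgesIn G S + 1 ≤ S.card := by
  have := edgesIn_add_card_components_add_card_le (G := G) hS
  rw [components_eq_singleton hC, card_singleton] at this
  have : 0 < (components G S).card := (hne.image (component G S)).card_pos
  omega

lemma card_le_edgesIn_add_card_treeComponents (hW : IsSparse G W) :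
    W.card ≤ edgesIn G W + (treeComponents G W).card := by
  rw [← sum_card_inter_components (G := G) (subset_refl W),
    ← sum_edgesIn_inter_components (G := G) (subset_refl W), treeComponents, card_filter,
    ← sum_add_distrib]
  refine sum_le_sum fun C hC => ?_
  rw [inter_eq_right.2 (subset_of_mem_components hC)]
  have := hW C (subset_of_mem_components hC)
  have := card_le_edgesIn_add_one_of_mem_components hC
  split_ifs <;> omega

/-- The excess `|E[S ∩ C]| + d_{S ∩ C}(u) - |S ∩ C|` is at most `d_C(u)`, and one less if `C` is a
tree adjacent to `u`, as subsets of a tree span forests. -/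
lemma edgesIn_inter_add_degIn_inter_add_ite_le (hW : IsSparse G W) (hC : C ∈ components G W)
    (S : Finset V) (u : V) :
    edgesIn G (S ∩ C) + degIn G (S ∩ C) u +
      (if edgesIn G C + 1 = C.card ∧ degIn G C u ≠ 0 then 1 else 0) ≤
      (S ∩ C).card + degIn G C u := by
  have hSC : S ∩ C ⊆ C := inter_subset_right
  have := hW _ (hSC.trans (subset_of_mem_components hC))
  have := degIn_mono G hSC u
  split_ifs with htree
  · rcases Nat.eq_zero_or_pos (degIn G (S ∩ C) u) with h0 | hpos
    · omega
    · have := edgesIn_add_one_le_card_of_subset hC htree.1 hSC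
        ((card_pos.1 hpos).mono (filter_subset _ _))
      omega
  · omega

end Sparse

section MinimalDeletion

variable {V : Type*} [Fintype V] {G : SimpleGraph V} {U W C : Finset V} {u : V}

lemma exists_degIn_ne_zero_of_mem_treeComponents (hUW : Disjoint U W)
    (hdeg : ∀ v ∈ U ∪ W, 2 ≤ degIn G (U ∪ W) v) (hC : C ∈ treeComponents G W) :
    ∃ u ∈ U, degIn G C u ≠ 0 := by
  obtain ⟨hCW, htree⟩ := mem_filter.1 hC
  have hsum : C.card • 2 ≤ ∑ w ∈ C, degIn G U w + 2 * edgesIn G C := by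
    rw [← sum_degIn, ← sum_add_distrib]
    refine card_nsmul_le_sum C _ 2 fun w hw => ?_
    rw [← degIn_eq_of_mem_components hCW hw, ← degIn_union G hUW]
    exact hdeg w (mem_union_right U (subset_of_mem_components hCW hw))
  rw [sum_degIn_comm, smul_eq_mul] at hsum
  exact exists_ne_zero_of_sum_ne_zero (by omega)

/-- A set `S ⊆ insert u W` spanning more edges than vertices must contain `u`; splitting
`S - u` along the components of `G[W]`, each tree component met by `S - u` loses one more
edge, which `u` has to make up. -/
lemma card_filter_treeComponents_add_two_le (hW : IsSparse G W)
    (hu : ¬ IsSparse G (insert u W)) :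
    ((treeComponents G W).filter fun C => degIn G C u ≠ 0).card + 2 ≤ degIn G W u := by
  obtain ⟨S, hSsub, hSdense⟩ : ∃ S ⊆ insert u W, S.card < edgesIn G S := by
    simpa [IsSparse] using hu
  have huS : u ∈ S := by
    by_contra huS
    exact (hW S fun v hv => (mem_insert.1 (hSsub hv)).resolve_left fun h => huS (h ▸ hv)).not_gt
      hSdense
  rw [← insert_erase huS, edgesIn_insert G (notMem_erase u S),
    card_insert_of_notMem (notMem_erase u S)] at hSdense
  set S' := S.erase u
  have hS' : S' ⊆ W := fun v hv =>
    (mem_insert.1 (hSsub (mem_of_mem_erase hv))).resolve_left (ne_of_mem_erase hv)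
  have hper := fun C (hC : C ∈ components G W) =>
    edgesIn_inter_add_degIn_inter_add_ite_le hW hC S' u
  have hdegW : ∑ C ∈ components G W, degIn G C u = degIn G W u := by
    rw [← sum_degIn_inter_components (subset_refl W) u]
    exact sum_congr rfl fun C hC => by rw [inter_eq_right.2 (subset_of_mem_components hC)]
  have := sum_le_sum hper
  rw [sum_add_distrib, sum_add_distrib, sum_add_distrib, sum_edgesIn_inter_components hS',
    sum_degIn_inter_components hS', sum_card_inter_components hS', hdegW, ← card_filter,
    ← filter_filter] at this
  unfold treeComponents
  omega

/-- `∑_{u ∈ U} (d(u) - 1) ≤ 3 (|E[U ∪ W]| - |U ∪ W|)`, with the subtractions moved across. -/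
theorem sum_degIn_add_three_mul_card_le (hUW : Disjoint U W) (hW : IsSparse G W)
    (hU : ∀ u ∈ U, ¬ IsSparse G (insert u W)) (hdeg : ∀ v ∈ U ∪ W, 2 ≤ degIn G (U ∪ W) v) :
    ∑ u ∈ U, degIn G (U ∪ W) u + 3 * (U ∪ W).card ≤ 3 * edgesIn G (U ∪ W) + U.card := by
  set 𝒯 := treeComponents G W
  have hW2 : W.card • 2 ≤ ∑ u ∈ U, degIn G W u + 2 * edgesIn G W := by
    rw [← sum_degIn_comm, ← sum_degIn, ← sum_add_distrib]
    refine card_nsmul_le_sum W _ 2 fun w hw => ?_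
    rw [← degIn_union G hUW]
    exact hdeg w (mem_union_right U hw)
  have hcover : 𝒯.card ≤ ∑ u ∈ U, (𝒯.filter fun C => degIn G C u ≠ 0).card :=
    calc 𝒯.card ≤ ∑ C ∈ 𝒯, (U.bipartiteAbove (fun C u => degIn G C u ≠ 0) C).card := by
          rw [card_eq_sum_ones]
          refine sum_le_sum fun C hC => ?_
          obtain ⟨u, hu, hCu⟩ := exists_degIn_ne_zero_of_mem_treeComponents hUW hdeg hC
          exact card_pos.2 ⟨u, mem_filter.2 ⟨hu, hCu⟩⟩
      _ = _ := sum_card_bipartiteAbove_eq_sum_card_bipartiteBelow _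
  have hU2 : ∑ u ∈ U, ((𝒯.filter fun C => degIn G C u ≠ 0).card + 2) ≤
      ∑ u ∈ U, degIn G W u :=
    sum_le_sum fun u hu => card_filter_treeComponents_add_two_le hW (hU u hu)
  have hforest : W.card ≤ edgesIn G W + 𝒯.card := card_le_edgesIn_add_card_treeComponents hW
  rw [sum_add_distrib, sum_const, smul_eq_mul] at hU2
  rw [smul_eq_mul] at hW2
  rw [sum_congr rfl fun u _ => degIn_union G hUW u, sum_add_distrib, sum_degIn,
    edgesIn_union G hUW, card_union_of_disjoint hUW]
  omega

lemma exists_minimal_isSparse_sdiff {R U : Finset V} (hUR : U ⊆ R) (hU : IsSparse G (R \ U)) :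
    ∃ U' ⊆ U, IsSparse G (R \ U') ∧ ∀ u ∈ U', ¬ IsSparse G (insert u (R \ U')) := by
  obtain ⟨U', hU'⟩ := (U.powerset.filter fun U' => IsSparse G (R \ U')).exists_minimal
    ⟨U, mem_filter.2 ⟨mem_powerset_self U, hU⟩⟩
  obtain ⟨hU'U, hU'sparse⟩ := mem_filter.1 hU'.prop
  refine ⟨U', mem_powerset.1 hU'U, hU'sparse, fun u hu hsparse => notMem_erase u U' ?_⟩
  refine hU'.le_of_le (mem_filter.2 ⟨?_, ?_⟩) (erase_subset u U') hu
  · exact mem_powerset.2 ((erase_subset u U').trans (mem_powerset.1 hU'U))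
  · rwa [sdiff_erase (hUR (mem_powerset.1 hU'U hu))]

end MinimalDeletion

section LocalRatio

lemma exists_sub_mul_nonneg_eq_zero {ι : Type*} {R : Finset ι} (hR : R.Nonempty) {c w : ι → ℝ}
    (hc : ∀ i ∈ R, 0 ≤ c i) (hw : ∀ i ∈ R, 0 < w i) :
    ∃ ε, 0 ≤ ε ∧ (∀ i ∈ R, 0 ≤ c i - ε * w i) ∧ ∃ i₀ ∈ R, c i₀ - ε * w i₀ = 0 := by
  obtain ⟨i₀, hi₀R, hi₀⟩ := exists_min_image R (fun i => c i / w i) hR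
  refine ⟨c i₀ / w i₀, div_nonneg (hc i₀ hi₀R) (hw i₀ hi₀R).le, fun i hi => ?_, i₀, hi₀R, ?_⟩
  · linarith [(le_div_iff₀ (hw i hi)).1 (hi₀ i hi)]
  · rw [div_mul_cancel₀ _ (hw i₀ hi₀R).ne', sub_self]

variable {V : Type*} [Fintype V] {G : SimpleGraph V} {x : V → ℝ} {R U : Finset V}

lemma PWD.sum_degIn_sub_one_le (hx : PWD G x) (hUR : U ⊆ R) (hU : IsSparse G (R \ U))
    (hmin : ∀ u ∈ U, ¬ IsSparse G (insert u (R \ U))) (hdeg : ∀ u ∈ R, 2 ≤ degIn G R u) :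
    ∑ u ∈ U, ((degIn G R u : ℝ) - 1) ≤ 3 * ∑ u ∈ R, ((degIn G R u : ℝ) - 1) * x u := by
  have hR : U ∪ (R \ U) = R := union_sdiff_of_subset hUR
  have key := sum_degIn_add_three_mul_card_le disjoint_sdiff hU hmin (by rwa [hR])
  rw [hR] at key
  have key' : ((∑ u ∈ U, degIn G R u : ℕ) : ℝ) + 3 * R.card ≤ 3 * edgesIn G R + U.card := by
    exact_mod_cast key
  push_cast at key'
  rw [sum_sub_distrib, sum_const, nsmul_eq_mul, mul_one]
  linarith [hx.2 R]

lemma PWD.exists_local_ratio (hx : PWD G x) (hdeg : ∀ u ∈ R, 2 ≤ degIn G R u)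
    {c c' : V → ℝ} {ε : ℝ} (hε : 0 ≤ ε) (hc' : ∀ u ∈ R, 0 ≤ c' u)
    (hcc' : ∀ u ∈ R, c u = c' u + ε * ((degIn G R u : ℝ) - 1)) (hUR : U ⊆ R)
    (hU : IsSparse G (R \ U)) (hcost : ∑ u ∈ U, c' u ≤ 3 * ∑ u ∈ R, c' u * x u) :
    ∃ U' ⊆ R, IsSparse G (R \ U') ∧ ∑ u ∈ U', c u ≤ 3 * ∑ u ∈ R, c u * x u := by
  obtain ⟨U', hU'U, hU', hmin⟩ := exists_minimal_isSparse_sdiff hUR hU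
  have hU'R := hU'U.trans hUR
  refine ⟨U', hU'R, hU', ?_⟩
  have hcx : ∑ u ∈ R, c u * x u =
      ∑ u ∈ R, c' u * x u + ε * ∑ u ∈ R, ((degIn G R u : ℝ) - 1) * x u := by
    rw [mul_sum, ← sum_add_distrib]
    exact sum_congr rfl fun u hu => by rw [hcc' u hu]; ring
  calc ∑ u ∈ U', c u = ∑ u ∈ U', c' u + ε * ∑ u ∈ U', ((degIn G R u : ℝ) - 1) := by
        rw [mul_sum, ← sum_add_distrib]
        exact sum_congr rfl fun u hu => hcc' u (hU'R hu)
    _ ≤ ∑ u ∈ U, c' u + ε * (3 * ∑ u ∈ R, ((degIn G R u : ℝ) - 1) * x u) := by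
        refine add_le_add ?_ (mul_le_mul_of_nonneg_left ?_ hε)
        · exact sum_le_sum_of_subset_of_nonneg hU'U fun u hu _ => hc' u (hUR hu)
        · exact hx.sum_degIn_sub_one_le hU'R hU' hmin hdeg
    _ ≤ 3 * ∑ u ∈ R, c u * x u := by rw [hcx]; linarith

theorem PWD.exists_isSparse_sdiff (hx : PWD G x) (R : Finset V) {c : V → ℝ}
    (hc : ∀ u ∈ R, 0 ≤ c u) :
    ∃ U ⊆ R, IsSparse G (R \ U) ∧ ∑ u ∈ U, c u ≤ 3 * ∑ u ∈ R, c u * x u := by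
  induction R using Finset.strongInduction generalizing c with
  | H R ih =>
  have hcx : ∀ {c : V → ℝ} (u : V), (∀ v ∈ R, 0 ≤ c v) →
      3 * ∑ v ∈ R.erase u, c v * x v ≤ 3 * ∑ v ∈ R, c v * x v := fun _ hc => by
    gcongr
    · exact fun v hv _ => mul_nonneg (hc v hv) (hx.1 v)
    · exact erase_subset _ R
  by_cases hR : IsSparse G R
  · refine ⟨∅, empty_subset R, by simpa using hR, ?_⟩
    simpa using sum_nonneg fun u hu => mul_nonneg (hc u hu) (hx.1 u)
  by_cases hleaf : ∃ u ∈ R, degIn G R u ≤ 1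
  · obtain ⟨u, huR, hu⟩ := hleaf
    obtain ⟨U, hUR, hU, hcost⟩ := ih _ (erase_ssubset huR) fun v hv => hc v (mem_of_mem_erase hv)
    have huU : u ∉ U := fun h => notMem_erase u R (hUR h)
    refine ⟨U, hUR.trans (erase_subset u R), ?_, hcost.trans (hcx u hc)⟩
    rw [← insert_erase (mem_sdiff.2 ⟨huR, huU⟩), ← erase_sdiff_comm]
    exact hU.insert ((degIn_mono G (sdiff_subset.trans (erase_subset u R)) u).trans hu)
  push Not at hleaf
  have hRne : R.Nonempty := nonempty_iff_ne_empty.2 fun h =>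
    hR fun S hS => by simp [subset_empty.1 (h ▸ hS), edgesIn_empty]
  have hw : ∀ u ∈ R, (0 : ℝ) < degIn G R u - 1 := fun u hu => by
    have : (1 : ℝ) < degIn G R u := by exact_mod_cast hleaf u hu
    linarith
  obtain ⟨ε, hε, hc', u₀, hu₀R, hc'u₀⟩ := exists_sub_mul_nonneg_eq_zero hRne hc hw
  obtain ⟨U, hUR, hU, hcost⟩ :=
    ih _ (erase_ssubset hu₀R) fun v hv => hc' v (mem_of_mem_erase hv)
  have hu₀U : u₀ ∉ U := fun h => notMem_erase u₀ R (hUR h)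
  refine hx.exists_local_ratio (U := insert u₀ U) hleaf hε hc' (fun u _ => by ring)
    (insert_subset hu₀R (hUR.trans (erase_subset _ _))) ?_ ?_
  · rwa [sdiff_insert, ← erase_sdiff_comm]
  · rw [sum_insert hu₀U, hc'u₀, zero_add]
    exact hcost.trans (hcx u₀ hc')

end LocalRatio

section Orientation

variable {V : Type*} [Fintype V] {G : SimpleGraph V} {x : V → ℝ} {y : Sym2 V → V → ℝ}

lemma POrient.one_le_sum_endpoints (h : POrient G x y) {e : Sym2 V} (he : e ∈ G.edgeFinset) :
    1 ≤ ∑ u ∈ univ.filter (· ∈ e), (x u + y e u) := by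
  induction e using Sym2.ind with
  | _ a b =>
    have hab : G.Adj a b := by simpa using he
    have hends : univ.filter (· ∈ s(a, b)) = {a, b} := by
      ext v
      simp
    rw [hends, sum_pair hab.ne]
    linarith [h.1 a b hab]

lemma POrient.sum_filter_mem_le (h : POrient G x y) {S : Finset V} {u : V} (hu : u ∈ S) :
    ∑ e ∈ (G.edgeFinset.filter fun e => ∀ v ∈ e, v ∈ S).filter (u ∈ ·), (x u + y e u) ≤
      ((degIn G S u : ℝ) - 1) * x u + 1 := by
  rw [sum_add_distrib, sum_const, card_filter_mem_edgesIn G hu, nsmul_eq_mul]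
  have hy : ∑ e ∈ (G.edgeFinset.filter fun e => ∀ v ∈ e, v ∈ S).filter (u ∈ ·), y e u ≤
      ∑ e ∈ G.edgeFinset.filter (u ∈ ·), y e u :=
    sum_le_sum_of_subset_of_nonneg (filter_subset_filter _ (filter_subset _ _))
      fun e _ _ => h.2.2.2.1 e u
  linarith [h.2.1 u]

/-- Each edge inside `S` is covered by `x` and `y` at its endpoints, while each vertex hands out
at most `1 - x u` of `y`; double counting gives the weak density inequality for `S`. -/
theorem POrient.pwd (h : POrient G x y) : PWD G x := by
  refine ⟨h.2.2.1, fun S => ?_⟩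
  set ES := G.edgeFinset.filter fun e => ∀ v ∈ e, v ∈ S
  have hswap : ∑ e ∈ ES, ∑ u ∈ univ.filter (· ∈ e), (x u + y e u) =
      ∑ u ∈ S, ∑ e ∈ ES.filter (u ∈ ·), (x u + y e u) :=
    sum_comm' fun e u => by
      simp only [mem_filter, mem_univ, true_and, ES]
      exact ⟨fun ⟨⟨he, hS⟩, hu⟩ => ⟨⟨⟨he, hS⟩, hu⟩, hS u hu⟩, fun ⟨h, _⟩ => h⟩
  calc (edgesIn G S : ℝ) - S.card = ∑ _e ∈ ES, (1 : ℝ) - S.card := by simp [edgesIn, ES]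
    _ ≤ ∑ e ∈ ES, ∑ u ∈ univ.filter (· ∈ e), (x u + y e u) - S.card := by
        gcongr with e he
        exact h.one_le_sum_endpoints (mem_filter.1 he).1
    _ ≤ ∑ u ∈ S, (((degIn G S u : ℝ) - 1) * x u + 1) - S.card := by
        rw [hswap]
        gcongr with u hu
        exact h.sum_filter_mem_le hu
    _ = ∑ u ∈ S, ((degIn G S u : ℝ) - 1) * x u := by simp [sum_add_distrib]

end Orientation

section Pseudoforest

variable {V : Type*} [Fintype V] {G : SimpleGraph V}

lemma isPseudoforest_of_isSparse_map {W : Type*} [Fintype W] {H : SimpleGraph W} (f : H ↪g G)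
    (h : IsSparse G (univ.map f.toEmbedding)) : IsPseudoforest H := by
  intro C
  set CV := univ.filter fun w => H.connectedComponentMk w = C
  have hedges : (H.edgeFinset.filter fun e => ∀ w ∈ e, H.connectedComponentMk w = C).card ≤
      edgesIn G (CV.map f.toEmbedding) := by
    refine card_le_card_of_injOn (Sym2.map f) (fun e he => ?_)
      (Sym2.map.injective f.injective).injOn
    obtain ⟨heH, hend⟩ := mem_filter.1 he
    induction e using Sym2.ind with
    | _ a b =>
      rw [Sym2.map_mk]
      refine mem_filter.2 ⟨by simpa using heH, fun v hv => ?_⟩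
      rcases Sym2.mem_iff.1 hv with rfl | rfl
      · exact mem_map_of_mem _ (mem_filter.2 ⟨mem_univ _, hend a (Sym2.mem_mk_left _ _)⟩)
      · exact mem_map_of_mem _ (mem_filter.2 ⟨mem_univ _, hend b (Sym2.mem_mk_right _ _)⟩)
  calc _ ≤ edgesIn G (CV.map f.toEmbedding) := hedges
    _ ≤ (CV.map f.toEmbedding).card := h _ (map_subset_map.2 (subset_univ CV))
    _ = CV.card := card_map _

theorem isPFDS_of_isSparse {U : Finset V} (h : IsSparse G (univ \ U)) : IsPFDS G U :=
  isPseudoforest_of_isSparse_map (SimpleGraph.Embedding.induce _) <| h.mono fun v hv => by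
    obtain ⟨v, -, rfl⟩ := mem_map.1 hv
    exact mem_sdiff.2 ⟨mem_univ _, v.2⟩

end Pseudoforest

end

/-- the integrality gap of the LP relaxation
`min {Σ c_u x_u : x ∈ Q_orient(G)}` of PFDS is at most `3`: for every
`x ∈ Q_orient(G)` there is a pseudoforest deletion set `U` with
`Σ_{u ∈ U} c(u) ≤ 3 Σ_{u ∈ V} c(u) x_u`. -/
theorem stmt_15 {V : Type*} [Fintype V] (G : SimpleGraph V)
    (c : V → ℝ) (hc : ∀ u, 0 ≤ c u) (x : V → ℝ) (hx : QOrient G x) :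
    ∃ U : Finset V, IsPFDS G U ∧ ∑ u ∈ U, c u ≤ 3 * ∑ u, c u * x u := by
  obtain ⟨y, hy⟩ := hx
  obtain ⟨U, -, hU, hcost⟩ := hy.pwd.exists_isSparse_sdiff univ fun u _ => hc u
  exact ⟨U, isPFDS_of_isSparse hU, hcost⟩

end FVS
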